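/- The kernel equation has at most one C² solution: if k₁ and k₂ are both twice continuously differentiable functions on D satisfying the kernel equation (i)–(iv), then k₁(x,y) = k₂(x,y) for every (x,y) ∈ D. -/

import Mathlib

/-!
Subtracting the two equations, `w = K1 - K2` solves the homogeneous problem
`□w = μ w + ∫_y^x w(x,z) f(z,y) dz`, `(w_x + w_y)(x,x) = 0`, `w_y(x,0) = 0`, `w(0,0) = 0`,
where `□ = ∂_x² - ∂_y² = (∂_x - ∂_y)(∂_x + ∂_y)`. Integrating along characteristics:
`w_x + w_y` vanishes on the diagonal, hence so does `w`; `w_x + w_y` at `(x,0)` is the integral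
of `□w` along the antidiagonal from `(x/2,x/2)`; the Neumann condition turns this into the value
of `w_x - w_y` at `(x,0)`, which is transported by `□w` along lines of slope one; and `w` is the
integral of `w_x - w_y` along an antidiagonal starting on the diagonal. So `|□w(p)| ≤ M(p.1)`
implies `|w(p)| ≤ ∫_0^{p.1} M`. For `φ(x) = sup {|w q| : q ∈ D, q.1 ≤ x}` the equation gives
`|□w(p)| ≤ C φ(p.1)`, hence `φ(x) ≤ C ∫_0^x φ`, and iterating, `φ(x) ≤ φ(1) (Cx)ⁿ / n! → 0`.
-/

open MeasureTheory Set
open scoped ENNReal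

noncomputable section

/-- The triangular domain `D = {(x,y) : 0 ≤ y ≤ x ≤ 1}`. -/
def Dset : Set (ℝ × ℝ) := {p : ℝ × ℝ | 0 ≤ p.2 ∧ p.2 ≤ p.1 ∧ p.1 ≤ 1}

/-- Partial derivative in the first variable (within `D`). -/
def pd1 (K : ℝ × ℝ → ℝ) (p : ℝ × ℝ) : ℝ := fderivWithin ℝ K Dset p (1, 0)

/-- Partial derivative in the second variable (within `D`). -/
def pd2 (K : ℝ × ℝ → ℝ) (p : ℝ × ℝ) : ℝ := fderivWithin ℝ K Dset p (0, 1)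

/-- `K` is a `C²` solution of the kernel equation on `D`:
(i) `k_xx - k_yy = μ k + f + ∫_y^x k(x,z) f(z,y) dz` on `D`;
(ii) `k_x(x,x) + k_y(x,x) = λ0/2`; (iii) `k_y(x,0) = 0`; (iv) `k(0,0) = 0`. -/
def IsKernelSol (lam0 : ℝ) (c1 : ℝ → ℝ) (f : ℝ → ℝ → ℝ) (K : ℝ × ℝ → ℝ) : Prop :=
  ContDiffOn ℝ 2 K Dset ∧
  (∀ p ∈ Dset, pd1 (pd1 K) p - pd2 (pd2 K) p =
      (lam0 - c1 p.1 + c1 p.2) * K p + f p.1 p.2 + ∫ z in p.2..p.1, K (p.1, z) * f z p.2) ∧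
  (∀ x ∈ Icc (0:ℝ) 1, pd1 K (x, x) + pd2 K (x, x) = lam0 / 2) ∧
  (∀ x ∈ Icc (0:ℝ) 1, pd2 K (x, 0) = 0) ∧
  K (0, 0) = 0

open Filter Topology

theorem abs_intervalIntegral_le {f g : ℝ → ℝ} {a b : ℝ} (hab : a ≤ b)
    (hg : IntervalIntegrable g volume a b) (h : ∀ t ∈ Ioc a b, |f t| ≤ g t) :
    |∫ t in a..b, f t| ≤ ∫ t in a..b, g t :=
  intervalIntegral.norm_integral_le_of_norm_le (f := f) hab (Eventually.of_forall h) hg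

theorem le_mul_pow_div_factorial_of_le_mul_integral {φ : ℝ → ℝ} {C T : ℝ} (hC : 0 ≤ C)
    (hφ : MonotoneOn φ (Icc 0 T)) (h : ∀ x ∈ Icc 0 T, φ x ≤ C * ∫ t in 0..x, φ t) (n : ℕ) :
    ∀ x ∈ Icc 0 T, φ x ≤ φ T * C ^ n * x ^ n / n.factorial := by
  induction n with
  | zero =>
    intro x hx
    simpa using hφ hx ⟨hx.1.trans hx.2, le_rfl⟩ hx.2
  | succ n ih =>
    intro x hx
    have hφx : IntervalIntegrable φ volume 0 x := by
      refine MonotoneOn.intervalIntegrable (hφ.mono ?_)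
      rw [uIcc_of_le hx.1]
      exact Icc_subset_Icc_right hx.2
    calc φ x ≤ C * ∫ t in 0..x, φ t := h x hx
      _ ≤ C * ∫ t in 0..x, φ T * C ^ n * t ^ n / n.factorial := by
          gcongr
          exact intervalIntegral.integral_mono_on hx.1 hφx
            (Continuous.intervalIntegrable (by fun_prop) _ _) fun t ht =>
              ih t ⟨ht.1, ht.2.trans hx.2⟩
      _ = φ T * C ^ (n + 1) * x ^ (n + 1) / (n + 1).factorial := by
          simp only [intervalIntegral.integral_div, intervalIntegral.integral_const_mul,
            integral_pow, Nat.factorial_succ]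
          push_cast
          field_simp
          ring

theorem nonpos_of_le_mul_integral {φ : ℝ → ℝ} {C T : ℝ} (hC : 0 ≤ C)
    (hφ : MonotoneOn φ (Icc 0 T)) (h : ∀ x ∈ Icc 0 T, φ x ≤ C * ∫ t in 0..x, φ t) {x : ℝ}
    (hx : x ∈ Icc 0 T) : φ x ≤ 0 := by
  have hlim : Tendsto (fun n : ℕ => φ T * ((C * x) ^ n / n.factorial)) atTop (𝓝 0) := by
    simpa using (FloorSemiring.tendsto_pow_div_factorial_atTop (C * x)).const_mul (φ T)
  refine ge_of_tendsto' hlim fun n => ?_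
  calc φ x ≤ φ T * C ^ n * x ^ n / n.factorial :=
        le_mul_pow_div_factorial_of_le_mul_integral hC hφ h n x hx
    _ = φ T * ((C * x) ^ n / n.factorial) := by ring

theorem convex_Dset : Convex ℝ Dset := by
  rintro p ⟨hp₀, hp₁, hp₂⟩ q ⟨hq₀, hq₁, hq₂⟩ a b ha hb hab
  refine ⟨?_, ?_, ?_⟩ <;>
    simp only [Prod.fst_add, Prod.snd_add, Prod.smul_fst, Prod.smul_snd, smul_eq_mul] <;>
    nlinarith

theorem Dset_subset_Icc_prod : Dset ⊆ Icc 0 1 ×ˢ Icc 0 1 :=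
  fun _ ⟨h₀, h₁, h₂⟩ => ⟨⟨h₀.trans h₁, h₂⟩, h₀, h₁.trans h₂⟩

theorem isCompact_Dset : IsCompact Dset :=
  (isCompact_Icc.prod isCompact_Icc).of_isClosed_subset
    ((isClosed_le continuous_const continuous_snd).inter
      ((isClosed_le continuous_snd continuous_fst).inter
        (isClosed_le continuous_fst continuous_const)))
    Dset_subset_Icc_prod

theorem interior_Dset_nonempty : (interior Dset).Nonempty := by
  have hopen : IsOpen {p : ℝ × ℝ | 0 < p.2 ∧ p.2 < p.1 ∧ p.1 < 1} :=
    (isOpen_lt continuous_const continuous_snd).inter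
      ((isOpen_lt continuous_snd continuous_fst).inter (isOpen_lt continuous_fst continuous_const))
  refine ⟨(1 / 2, 1 / 4), interior_maximal (fun p hp => ?_) hopen (by norm_num)⟩
  exact ⟨hp.1.le, hp.2.1.le, hp.2.2.le⟩

theorem uniqueDiffOn_Dset : UniqueDiffOn ℝ Dset :=
  uniqueDiffOn_convex convex_Dset interior_Dset_nonempty

theorem Dset_subset_closure_interior : Dset ⊆ closure (interior Dset) := by
  rw [convex_Dset.closure_interior_eq_closure_of_nonempty_interior interior_Dset_nonempty]
  exact subset_closure

theorem fderivWithin_Dset_apply (g : ℝ × ℝ → ℝ) (p : ℝ × ℝ) (x y : ℝ) :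
    fderivWithin ℝ g Dset p (x, y) = x * pd1 g p + y * pd2 g p := by
  have hxy : ((x, y) : ℝ × ℝ) = x • (1, 0) + y • (0, 1) := by simp
  rw [hxy, map_add, map_smul, map_smul]
  rfl

def wave (w : ℝ × ℝ → ℝ) (p : ℝ × ℝ) : ℝ := pd1 (pd1 w) p - pd2 (pd2 w) p

section Partials

variable {m n : WithTop ℕ∞} {g u v : ℝ × ℝ → ℝ} {p : ℝ × ℝ}

theorem contDiffOn_pd1 (hg : ContDiffOn ℝ n g Dset) (hmn : m + 1 ≤ n) :
    ContDiffOn ℝ m (pd1 g) Dset :=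
  (hg.fderivWithin uniqueDiffOn_Dset hmn).clm_apply contDiffOn_const

theorem contDiffOn_pd2 (hg : ContDiffOn ℝ n g Dset) (hmn : m + 1 ≤ n) :
    ContDiffOn ℝ m (pd2 g) Dset :=
  (hg.fderivWithin uniqueDiffOn_Dset hmn).clm_apply contDiffOn_const

theorem pd1_sub (hp : p ∈ Dset) (hu : DifferentiableWithinAt ℝ u Dset p)
    (hv : DifferentiableWithinAt ℝ v Dset p) : pd1 (u - v) p = pd1 u p - pd1 v p := by
  rw [pd1, fderivWithin_sub (uniqueDiffOn_Dset p hp) hu hv]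
  rfl

theorem pd2_sub (hp : p ∈ Dset) (hu : DifferentiableWithinAt ℝ u Dset p)
    (hv : DifferentiableWithinAt ℝ v Dset p) : pd2 (u - v) p = pd2 u p - pd2 v p := by
  rw [pd2, fderivWithin_sub (uniqueDiffOn_Dset p hp) hu hv]
  rfl

theorem fderivWithin_fderivWithin_apply (hg : ContDiffOn ℝ 2 g Dset) (hp : p ∈ Dset)
    (a b : ℝ × ℝ) :
    fderivWithin ℝ (fun q => fderivWithin ℝ g Dset q b) Dset p a =
      fderivWithin ℝ (fderivWithin ℝ g Dset) Dset p a b := by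
  have hdiff : DifferentiableWithinAt ℝ (fderivWithin ℝ g Dset) Dset p :=
    ((hg.fderivWithin uniqueDiffOn_Dset (m := 1) (by norm_num)).differentiableOn
      one_ne_zero) p hp
  rw [fderivWithin_clm_apply (uniqueDiffOn_Dset p hp) hdiff (differentiableWithinAt_const b)]
  simp

theorem pd2_pd1 (hg : ContDiffOn ℝ 2 g Dset) (hp : p ∈ Dset) :
    pd2 (pd1 g) p = pd1 (pd2 g) p := by
  change fderivWithin ℝ (fun q => fderivWithin ℝ g Dset q (1, 0)) Dset p (0, 1) =
    fderivWithin ℝ (fun q => fderivWithin ℝ g Dset q (0, 1)) Dset p (1, 0)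
  rw [fderivWithin_fderivWithin_apply hg hp, fderivWithin_fderivWithin_apply hg hp]
  exact (hg p hp).isSymmSndFDerivWithinAt (by simp) uniqueDiffOn_Dset
    (Dset_subset_closure_interior hp) hp _ _

theorem pd1_congr (h : EqOn u v Dset) (hp : p ∈ Dset) : pd1 u p = pd1 v p := by
  rw [pd1, pd1, fderivWithin_congr' h hp]

theorem pd2_congr (h : EqOn u v Dset) (hp : p ∈ Dset) : pd2 u p = pd2 v p := by
  rw [pd2, pd2, fderivWithin_congr' h hp]

theorem wave_sub (hu : ContDiffOn ℝ 2 u Dset) (hv : ContDiffOn ℝ 2 v Dset) (hp : p ∈ Dset) :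
    wave (u - v) p = wave u p - wave v p := by
  have hdiff {g : ℝ × ℝ → ℝ} (hg : ContDiffOn ℝ 1 g Dset) : ∀ q ∈ Dset,
      DifferentiableWithinAt ℝ g Dset q := hg.differentiableOn one_ne_zero
  have hpd1 : EqOn (pd1 (u - v)) (pd1 u - pd1 v) Dset := fun q hq =>
    pd1_sub hq (hdiff (hu.of_le one_le_two) q hq) (hdiff (hv.of_le one_le_two) q hq)
  have hpd2 : EqOn (pd2 (u - v)) (pd2 u - pd2 v) Dset := fun q hq =>
    pd2_sub hq (hdiff (hu.of_le one_le_two) q hq) (hdiff (hv.of_le one_le_two) q hq)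
  rw [wave, pd1_congr hpd1 hp, pd2_congr hpd2 hp,
    pd1_sub hp (hdiff (contDiffOn_pd1 hu le_rfl) p hp) (hdiff (contDiffOn_pd1 hv le_rfl) p hp),
    pd2_sub hp (hdiff (contDiffOn_pd2 hu le_rfl) p hp) (hdiff (contDiffOn_pd2 hv le_rfl) p hp),
    wave, wave]
  ring

end Partials

theorem integral_fderivWithin_line_eq_sub {g : ℝ × ℝ → ℝ} (hg : ContDiffOn ℝ 1 g Dset)
    {γ : ℝ → ℝ × ℝ} {v : ℝ × ℝ} (hγ : ∀ t, HasDerivAt γ v t) {t₁ t₂ : ℝ} (ht : t₁ ≤ t₂)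
    (hmaps : MapsTo γ (Icc t₁ t₂) Dset) :
    ∫ t in t₁..t₂, fderivWithin ℝ g Dset (γ t) v = g (γ t₂) - g (γ t₁) := by
  have hγc : Continuous γ := continuous_iff_continuousAt.2 fun t => (hγ t).continuousAt
  refine intervalIntegral.integral_eq_sub_of_hasDeriv_right_of_le ht
    (hg.continuousOn.comp hγc.continuousOn hmaps) (fun t ht' => ?_) ?_
  · have hmem := hmaps (Ioo_subset_Icc_self ht')
    have hderiv := ((hg.differentiableOn one_ne_zero) _ hmem).hasFDerivWithinAt
      |>.comp_hasDerivWithinAt t (hγ t).hasDerivWithinAt hmaps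
    exact hderiv.mono_of_mem_nhdsWithin (Icc_mem_nhdsGT_of_mem ⟨ht'.1.le, ht'.2⟩)
  · refine ContinuousOn.intervalIntegrable_of_Icc ht ?_
    exact ((hg.continuousOn_fderivWithin uniqueDiffOn_Dset le_rfl).clm_apply
      continuousOn_const).comp hγc.continuousOn hmaps

section Characteristics

variable {w : ℝ × ℝ → ℝ}

theorem fderivWithin_pd1_add_pd2 (hw : ContDiffOn ℝ 2 w Dset) {p : ℝ × ℝ} (hp : p ∈ Dset) :
    fderivWithin ℝ (fun q => pd1 w q + pd2 w q) Dset p (1, -1) = wave w p := by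
  have h₁ := ((contDiffOn_pd1 hw (m := 1) le_rfl).differentiableOn one_ne_zero) p hp
  have h₂ := ((contDiffOn_pd2 hw (m := 1) le_rfl).differentiableOn one_ne_zero) p hp
  rw [fderivWithin_fun_add (uniqueDiffOn_Dset p hp) h₁ h₂, add_apply,
    fderivWithin_Dset_apply, fderivWithin_Dset_apply, pd2_pd1 hw hp, wave]
  ring

theorem fderivWithin_pd1_sub_pd2 (hw : ContDiffOn ℝ 2 w Dset) {p : ℝ × ℝ} (hp : p ∈ Dset) :
    fderivWithin ℝ (fun q => pd1 w q - pd2 w q) Dset p (1, 1) = wave w p := by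
  have h₁ := ((contDiffOn_pd1 hw (m := 1) le_rfl).differentiableOn one_ne_zero) p hp
  have h₂ := ((contDiffOn_pd2 hw (m := 1) le_rfl).differentiableOn one_ne_zero) p hp
  rw [fderivWithin_fun_sub (uniqueDiffOn_Dset p hp) h₁ h₂, sub_apply,
    fderivWithin_Dset_apply, fderivWithin_Dset_apply, pd2_pd1 hw hp, wave]
  ring

theorem apply_diagonal_eq_zero (hw : ContDiffOn ℝ 1 w Dset)
    (hdiag : ∀ x ∈ Icc (0:ℝ) 1, pd1 w (x, x) + pd2 w (x, x) = 0) (h00 : w (0, 0) = 0)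
    {x : ℝ} (hx : x ∈ Icc (0:ℝ) 1) : w (x, x) = 0 := by
  have hmaps : MapsTo (fun t : ℝ => (t, t)) (Icc 0 x) Dset :=
    fun t ht => ⟨ht.1, le_rfl, ht.2.trans hx.2⟩
  have h := integral_fderivWithin_line_eq_sub hw
    (fun t => (hasDerivAt_id' t).prodMk (hasDerivAt_id' t)) hx.1 hmaps
  rw [h00, sub_zero] at h
  rw [← h, intervalIntegral.integral_congr (g := fun _ => 0) fun t ht => ?_,
    intervalIntegral.integral_zero]
  rw [uIcc_of_le hx.1] at ht
  simpa only [fderivWithin_Dset_apply, one_mul] using hdiag t ⟨ht.1, ht.2.trans hx.2⟩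

theorem pd1_add_pd2_sub_eq_integral_wave (hw : ContDiffOn ℝ 2 w Dset) {x : ℝ}
    (hx : x ∈ Icc (0:ℝ) 1) :
    pd1 w (x, 0) + pd2 w (x, 0) - (pd1 w (x / 2, x / 2) + pd2 w (x / 2, x / 2)) =
      ∫ t in x / 2..x, wave w (t, x - t) := by
  have hmaps : MapsTo (fun t : ℝ => (t, x - t)) (Icc (x / 2) x) Dset :=
    fun t ht => ⟨by linarith [ht.2], by linarith [ht.1], ht.2.trans hx.2⟩
  have h := integral_fderivWithin_line_eq_sub
    ((contDiffOn_pd1 hw le_rfl).add (contDiffOn_pd2 hw le_rfl))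
    (fun t => (hasDerivAt_id' t).prodMk ((hasDerivAt_id' t).const_sub x))
    (by linarith [hx.1] : x / 2 ≤ x) hmaps
  rw [sub_self, sub_half] at h
  rw [← h]
  refine intervalIntegral.integral_congr fun t ht => ?_
  exact fderivWithin_pd1_add_pd2 hw (hmaps (by rwa [uIcc_of_le (by linarith [hx.1])] at ht))

theorem pd1_sub_pd2_sub_eq_integral_wave (hw : ContDiffOn ℝ 2 w Dset) {p : ℝ × ℝ}
    (hp : p ∈ Dset) :
    pd1 w p - pd2 w p - (pd1 w (p.1 - p.2, 0) - pd2 w (p.1 - p.2, 0)) =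
      ∫ t in p.1 - p.2..p.1, wave w (t, t - (p.1 - p.2)) := by
  obtain ⟨hp₀, hp₁, hp₂⟩ := hp
  have hmaps : MapsTo (fun t : ℝ => (t, t - (p.1 - p.2))) (Icc (p.1 - p.2) p.1) Dset :=
    fun t ht => ⟨by linarith [ht.1], by linarith, ht.2.trans hp₂⟩
  have h := integral_fderivWithin_line_eq_sub
    ((contDiffOn_pd1 hw le_rfl).sub (contDiffOn_pd2 hw le_rfl))
    (fun t => (hasDerivAt_id' t).prodMk ((hasDerivAt_id' t).sub_const (p.1 - p.2)))
    (by linarith : p.1 - p.2 ≤ p.1) hmaps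
  rw [sub_self, sub_sub_cancel, Prod.mk.eta] at h
  rw [← h]
  refine intervalIntegral.integral_congr fun t ht => ?_
  exact fderivWithin_pd1_sub_pd2 hw (hmaps (by rwa [uIcc_of_le (by linarith)] at ht))

theorem sub_eq_integral_pd1_sub_pd2 (hw : ContDiffOn ℝ 1 w Dset) {p : ℝ × ℝ}
    (hp : p ∈ Dset) :
    w p - w ((p.1 + p.2) / 2, (p.1 + p.2) / 2) =
      ∫ t in (p.1 + p.2) / 2..p.1, (pd1 w (t, p.1 + p.2 - t) - pd2 w (t, p.1 + p.2 - t)) := by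
  obtain ⟨hp₀, hp₁, hp₂⟩ := hp
  have hmaps : MapsTo (fun t : ℝ => (t, p.1 + p.2 - t)) (Icc ((p.1 + p.2) / 2) p.1) Dset :=
    fun t ht => ⟨by linarith [ht.2], by linarith [ht.1], ht.2.trans hp₂⟩
  have h := integral_fderivWithin_line_eq_sub hw
    (fun t => (hasDerivAt_id' t).prodMk ((hasDerivAt_id' t).const_sub (p.1 + p.2)))
    (by linarith : (p.1 + p.2) / 2 ≤ p.1) hmaps
  rw [add_sub_cancel_left, show p.1 + p.2 - (p.1 + p.2) / 2 = (p.1 + p.2) / 2 by ring] at h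
  rw [← h]
  simp only [fderivWithin_Dset_apply, one_mul, neg_one_mul, ← sub_eq_add_neg]

theorem abs_pd1_add_pd2_bottom_le (hw : ContDiffOn ℝ 2 w Dset)
    (hdiag : ∀ x ∈ Icc (0:ℝ) 1, pd1 w (x, x) + pd2 w (x, x) = 0) {M : ℝ → ℝ}
    (hM₀ : ∀ t, 0 ≤ M t) (hM : ∀ a b, IntervalIntegrable M volume a b)
    (hwave : ∀ p ∈ Dset, |wave w p| ≤ M p.1) {x : ℝ} (hx : x ∈ Icc (0:ℝ) 1) :
    |pd1 w (x, 0) + pd2 w (x, 0)| ≤ ∫ t in 0..x, M t := by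
  have hhalf : x / 2 ≤ x := by linarith [hx.1]
  have h := pd1_add_pd2_sub_eq_integral_wave hw hx
  rw [hdiag (x / 2) ⟨by linarith [hx.1], hhalf.trans hx.2⟩, sub_zero] at h
  rw [h]
  calc |∫ t in x / 2..x, wave w (t, x - t)| ≤ ∫ t in x / 2..x, M t :=
        abs_intervalIntegral_le hhalf (hM _ _) fun t ht =>
          hwave (t, x - t) ⟨by linarith [ht.2], by linarith [ht.1], ht.2.trans hx.2⟩
    _ ≤ ∫ t in 0..x, M t :=
        intervalIntegral.integral_mono_interval (by linarith [hx.1]) hhalf le_rfl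
          (Eventually.of_forall hM₀) (hM _ _)

theorem abs_pd1_sub_pd2_le (hw : ContDiffOn ℝ 2 w Dset)
    (hdiag : ∀ x ∈ Icc (0:ℝ) 1, pd1 w (x, x) + pd2 w (x, x) = 0)
    (hbot : ∀ x ∈ Icc (0:ℝ) 1, pd2 w (x, 0) = 0) {M : ℝ → ℝ}
    (hM₀ : ∀ t, 0 ≤ M t) (hM : ∀ a b, IntervalIntegrable M volume a b)
    (hwave : ∀ p ∈ Dset, |wave w p| ≤ M p.1) {p : ℝ × ℝ} (hp : p ∈ Dset) :
    |pd1 w p - pd2 w p| ≤ ∫ t in 0..p.1, M t := by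
  obtain ⟨hp₀, hp₁, hp₂⟩ := hp
  have hx : p.1 - p.2 ∈ Icc (0:ℝ) 1 := ⟨by linarith, by linarith⟩
  have hstart := abs_pd1_add_pd2_bottom_le hw hdiag hM₀ hM hwave hx
  have h := pd1_sub_pd2_sub_eq_integral_wave hw ⟨hp₀, hp₁, hp₂⟩
  rw [hbot _ hx, add_zero] at hstart
  rw [hbot _ hx, sub_zero, sub_eq_iff_eq_add'] at h
  have hchar :
      |∫ t in p.1 - p.2..p.1, wave w (t, t - (p.1 - p.2))| ≤ ∫ t in p.1 - p.2..p.1, M t :=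
    abs_intervalIntegral_le (by linarith) (hM _ _) fun t ht =>
      hwave (t, t - (p.1 - p.2)) ⟨by linarith [ht.1], by linarith, ht.2.trans hp₂⟩
  calc |pd1 w p - pd2 w p|
      ≤ |pd1 w (p.1 - p.2, 0)| + |∫ t in p.1 - p.2..p.1, wave w (t, t - (p.1 - p.2))| :=
        h ▸ abs_add_le _ _
    _ ≤ (∫ t in 0..p.1 - p.2, M t) + ∫ t in p.1 - p.2..p.1, M t := add_le_add hstart hchar
    _ = ∫ t in 0..p.1, M t := intervalIntegral.integral_add_adjacent_intervals (hM _ _) (hM _ _)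

theorem abs_le_integral_of_abs_wave_le (hw : ContDiffOn ℝ 2 w Dset)
    (hdiag : ∀ x ∈ Icc (0:ℝ) 1, pd1 w (x, x) + pd2 w (x, x) = 0)
    (hbot : ∀ x ∈ Icc (0:ℝ) 1, pd2 w (x, 0) = 0) (h00 : w (0, 0) = 0) {M : ℝ → ℝ}
    (hM₀ : ∀ t, 0 ≤ M t) (hM : ∀ a b, IntervalIntegrable M volume a b)
    (hwave : ∀ p ∈ Dset, |wave w p| ≤ M p.1) {p : ℝ × ℝ} (hp : p ∈ Dset) :
    |w p| ≤ ∫ t in 0..p.1, M t := by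
  obtain ⟨hp₀, hp₁, hp₂⟩ := hp
  have hw₁ : ContDiffOn ℝ 1 w Dset := hw.of_le one_le_two
  have h := sub_eq_integral_pd1_sub_pd2 hw₁ ⟨hp₀, hp₁, hp₂⟩
  rw [apply_diagonal_eq_zero hw₁ hdiag h00 ⟨by linarith, by linarith⟩, sub_zero] at h
  have hbound : ∀ t ∈ uIoc ((p.1 + p.2) / 2) p.1,
      ‖pd1 w (t, p.1 + p.2 - t) - pd2 w (t, p.1 + p.2 - t)‖ ≤ ∫ t in 0..p.1, M t := by
    intro t ht
    rw [uIoc_of_le (by linarith)] at ht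
    calc |pd1 w (t, p.1 + p.2 - t) - pd2 w (t, p.1 + p.2 - t)| ≤ ∫ s in 0..t, M s :=
          abs_pd1_sub_pd2_le hw hdiag hbot hM₀ hM hwave
            ⟨by linarith [ht.2], by linarith [ht.1], ht.2.trans hp₂⟩
      _ ≤ ∫ s in 0..p.1, M s :=
          intervalIntegral.integral_mono_interval le_rfl (by linarith [ht.1]) ht.2
            (Eventually.of_forall hM₀) (hM _ _)
  have hlen : |p.1 - (p.1 + p.2) / 2| ≤ 1 := by
    rw [abs_of_nonneg (by linarith)]
    linarith
  calc |w p| ≤ (∫ t in 0..p.1, M t) * |p.1 - (p.1 + p.2) / 2| :=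
        h ▸ intervalIntegral.norm_integral_le_of_norm_le_const hbound
    _ ≤ ∫ t in 0..p.1, M t :=
        mul_le_of_le_one_right (intervalIntegral.integral_nonneg (by linarith) fun t _ => hM₀ t)
          hlen

end Characteristics

def supAbsUpTo (w : ℝ × ℝ → ℝ) (x : ℝ) : ℝ :=
  sSup ((fun q => |w q|) '' {q | q ∈ Dset ∧ q.1 ≤ x})

section SupAbsUpTo

variable {w : ℝ × ℝ → ℝ}

theorem supAbsUpTo_nonneg (w : ℝ × ℝ → ℝ) (x : ℝ) : 0 ≤ supAbsUpTo w x :=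
  Real.sSup_nonneg (by rintro _ ⟨q, _, rfl⟩; exact abs_nonneg _)

theorem abs_le_supAbsUpTo (hw : ContinuousOn w Dset) {q : ℝ × ℝ} (hq : q ∈ Dset) {x : ℝ}
    (hx : q.1 ≤ x) : |w q| ≤ supAbsUpTo w x :=
  le_csSup ((isCompact_Dset.bddAbove_image hw.abs).mono (image_mono fun _ hq => hq.1))
    ⟨q, ⟨hq, hx⟩, rfl⟩

theorem supAbsUpTo_le {x c : ℝ} (hc : 0 ≤ c) (h : ∀ q ∈ Dset, q.1 ≤ x → |w q| ≤ c) :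
    supAbsUpTo w x ≤ c :=
  Real.sSup_le (by rintro _ ⟨q, ⟨hq, hqx⟩, rfl⟩; exact h q hq hqx) hc

theorem monotone_supAbsUpTo (hw : ContinuousOn w Dset) : Monotone (supAbsUpTo w) :=
  fun _ _ hxy => supAbsUpTo_le (supAbsUpTo_nonneg w _) fun _ hq hqx =>
    abs_le_supAbsUpTo hw hq (hqx.trans hxy)

theorem abs_wave_le {g : ℝ × ℝ → ℝ} {f : ℝ → ℝ → ℝ} {Cg Cf : ℝ} (hw : ContinuousOn w Dset)
    (hg : ∀ p ∈ Dset, |g p| ≤ Cg) (hf : ∀ p ∈ Dset, |f p.1 p.2| ≤ Cf)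
    (hwave : ∀ p ∈ Dset, wave w p = g p * w p + ∫ z in p.2..p.1, w (p.1, z) * f z p.2)
    {p : ℝ × ℝ} (hp : p ∈ Dset) : |wave w p| ≤ (Cg + Cf) * supAbsUpTo w p.1 := by
  obtain ⟨hp₀, hp₁, hp₂⟩ := hp
  have hφ := supAbsUpTo_nonneg w p.1
  have hCf : 0 ≤ Cf := (abs_nonneg _).trans (hf p ⟨hp₀, hp₁, hp₂⟩)
  have hint : |∫ z in p.2..p.1, w (p.1, z) * f z p.2| ≤ Cf * supAbsUpTo w p.1 * |p.1 - p.2| :=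
    intervalIntegral.norm_integral_le_of_norm_le_const (f := fun z => w (p.1, z) * f z p.2)
      fun z hz => by
        rw [uIoc_of_le hp₁] at hz
        rw [Real.norm_eq_abs, abs_mul, mul_comm]
        exact mul_le_mul (hf (z, p.2) ⟨hp₀, hz.1.le, hz.2.trans hp₂⟩)
          (abs_le_supAbsUpTo hw (q := (p.1, z)) ⟨hp₀.trans hz.1.le, hz.2, hp₂⟩ le_rfl)
          (abs_nonneg _) hCf
  have hlen : |p.1 - p.2| ≤ 1 := by
    rw [abs_of_nonneg (by linarith)]
    linarith
  rw [hwave p ⟨hp₀, hp₁, hp₂⟩]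
  calc |g p * w p + ∫ z in p.2..p.1, w (p.1, z) * f z p.2|
      ≤ |g p * w p| + |∫ z in p.2..p.1, w (p.1, z) * f z p.2| := abs_add_le _ _
    _ ≤ Cg * supAbsUpTo w p.1 + Cf * supAbsUpTo w p.1 := by
        gcongr ?_ + ?_
        · rw [abs_mul]
          exact mul_le_mul (hg p ⟨hp₀, hp₁, hp₂⟩) (abs_le_supAbsUpTo hw ⟨hp₀, hp₁, hp₂⟩ le_rfl)
            (abs_nonneg _) ((abs_nonneg _).trans (hg p ⟨hp₀, hp₁, hp₂⟩))
        · exact hint.trans (mul_le_of_le_one_right (mul_nonneg hCf hφ) hlen)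
    _ = (Cg + Cf) * supAbsUpTo w p.1 := by ring

end SupAbsUpTo

def IsHomogeneousKernelSol (g : ℝ × ℝ → ℝ) (f : ℝ → ℝ → ℝ) (w : ℝ × ℝ → ℝ) : Prop :=
  ContDiffOn ℝ 2 w Dset ∧
  (∀ p ∈ Dset, wave w p = g p * w p + ∫ z in p.2..p.1, w (p.1, z) * f z p.2) ∧
  (∀ x ∈ Icc (0:ℝ) 1, pd1 w (x, x) + pd2 w (x, x) = 0) ∧
  (∀ x ∈ Icc (0:ℝ) 1, pd2 w (x, 0) = 0) ∧
  w (0, 0) = 0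

theorem IsHomogeneousKernelSol.eq_zero {g w : ℝ × ℝ → ℝ} {f : ℝ → ℝ → ℝ} {Cg Cf : ℝ}
    (hw : IsHomogeneousKernelSol g f w) (hg : ∀ p ∈ Dset, |g p| ≤ Cg)
    (hf : ∀ p ∈ Dset, |f p.1 p.2| ≤ Cf) {p : ℝ × ℝ} (hp : p ∈ Dset) : w p = 0 := by
  obtain ⟨hC2, hwave, hdiag, hbot, h00⟩ := hw
  have h00D : ((0, 0) : ℝ × ℝ) ∈ Dset := ⟨le_rfl, le_rfl, zero_le_one⟩
  have hC : 0 ≤ Cg + Cf :=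
    add_nonneg ((abs_nonneg _).trans (hg _ h00D)) ((abs_nonneg _).trans (hf _ h00D))
  set φ := supAbsUpTo w
  have hφ : Monotone φ := monotone_supAbsUpTo hC2.continuousOn
  have hCφ : ∀ a b, IntervalIntegrable (fun t => (Cg + Cf) * φ t) volume a b :=
    fun a b => (hφ.intervalIntegrable).const_mul _
  have hgronwall : ∀ x ∈ Icc (0:ℝ) 1, φ x ≤ (Cg + Cf) * ∫ t in 0..x, φ t := by
    intro x hx
    refine supAbsUpTo_le (mul_nonneg hC (intervalIntegral.integral_nonneg hx.1 fun t _ =>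
      supAbsUpTo_nonneg w t)) fun q hq hqx => ?_
    calc |w q| ≤ ∫ t in 0..q.1, (Cg + Cf) * φ t :=
          abs_le_integral_of_abs_wave_le hC2 hdiag hbot h00
            (fun t => mul_nonneg hC (supAbsUpTo_nonneg w t)) hCφ
            (fun p hp => abs_wave_le hC2.continuousOn hg hf hwave hp) hq
      _ ≤ ∫ t in 0..x, (Cg + Cf) * φ t :=
          intervalIntegral.integral_mono_interval le_rfl (hq.1.trans hq.2.1) hqx
            (Eventually.of_forall fun t => mul_nonneg hC (supAbsUpTo_nonneg w t)) (hCφ _ _)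
      _ = (Cg + Cf) * ∫ t in 0..x, φ t := intervalIntegral.integral_const_mul _ _
  have hφp := nonpos_of_le_mul_integral hC (hφ.monotoneOn _) hgronwall
    ⟨hp.1.trans hp.2.1, hp.2.2⟩
  exact abs_nonpos_iff.1 ((abs_le_supAbsUpTo hC2.continuousOn hp le_rfl).trans hφp)

theorem intervalIntegrable_mul_kernel {K : ℝ × ℝ → ℝ} {f : ℝ → ℝ → ℝ}
    (hK : ContinuousOn K Dset) (hf : ContinuousOn (fun q : ℝ × ℝ => f q.1 q.2) Dset)
    {p : ℝ × ℝ} (hp : p ∈ Dset) :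
    IntervalIntegrable (fun z => K (p.1, z) * f z p.2) volume p.2 p.1 := by
  obtain ⟨hp₀, hp₁, hp₂⟩ := hp
  refine ContinuousOn.intervalIntegrable_of_Icc hp₁ (ContinuousOn.mul ?_ ?_)
  · exact hK.comp (by fun_prop) fun z hz => ⟨hp₀.trans hz.1, hz.2, hp₂⟩
  · exact hf.comp (f := fun z => (z, p.2)) (by fun_prop) fun z hz =>
      ⟨hp₀, hz.1, hz.2.trans hp₂⟩

theorem IsKernelSol.sub {lam0 : ℝ} {c1 : ℝ → ℝ} {f : ℝ → ℝ → ℝ} {K1 K2 : ℝ × ℝ → ℝ}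
    (hK1 : IsKernelSol lam0 c1 f K1) (hK2 : IsKernelSol lam0 c1 f K2)
    (hf : ContinuousOn (fun q : ℝ × ℝ => f q.1 q.2) Dset) :
    IsHomogeneousKernelSol (fun p => lam0 - c1 p.1 + c1 p.2) f (K1 - K2) := by
  obtain ⟨hC1, hPDE1, hdiag1, hbot1, h001⟩ := hK1
  obtain ⟨hC2, hPDE2, hdiag2, hbot2, h002⟩ := hK2
  have hd1 := hC1.differentiableOn two_ne_zero
  have hd2 := hC2.differentiableOn two_ne_zero
  refine ⟨hC1.sub hC2, fun p hp => ?_, fun x hx => ?_, fun x hx => ?_, by simp [h001, h002]⟩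
  · have hint : ∫ z in p.2..p.1, (K1 - K2) (p.1, z) * f z p.2 =
        (∫ z in p.2..p.1, K1 (p.1, z) * f z p.2) - ∫ z in p.2..p.1, K2 (p.1, z) * f z p.2 := by
      rw [← intervalIntegral.integral_sub (intervalIntegrable_mul_kernel hC1.continuousOn hf hp)
        (intervalIntegrable_mul_kernel hC2.continuousOn hf hp)]
      simp only [Pi.sub_apply, sub_mul]
    rw [wave_sub hC1 hC2 hp, wave, wave, hPDE1 p hp, hPDE2 p hp, hint, Pi.sub_apply]
    ring
  · have hxx : ((x, x) : ℝ × ℝ) ∈ Dset := ⟨hx.1, le_rfl, hx.2⟩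
    rw [pd1_sub hxx (hd1 _ hxx) (hd2 _ hxx), pd2_sub hxx (hd1 _ hxx) (hd2 _ hxx)]
    linarith [hdiag1 x hx, hdiag2 x hx]
  · have hx0 : ((x, 0) : ℝ × ℝ) ∈ Dset := ⟨le_rfl, hx.1, hx.2⟩
    rw [pd2_sub hx0 (hd1 _ hx0) (hd2 _ hx0), hbot1 x hx, hbot2 x hx, sub_self]

theorem kernel_equation_uniqueness_general (lam0 : ℝ)
    (c1 : ℝ → ℝ) (hc1 : ContinuousOn c1 (Icc 0 1))
    (f : ℝ → ℝ → ℝ)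
    (hf : ContinuousOn (fun p : ℝ × ℝ => f p.1 p.2) (Icc 0 1 ×ˢ Icc 0 1))
    (K1 K2 : ℝ × ℝ → ℝ) (hK1 : IsKernelSol lam0 c1 f K1) (hK2 : IsKernelSol lam0 c1 f K2) :
    ∀ p ∈ Dset, K1 p = K2 p := by
  have hfD : ContinuousOn (fun q : ℝ × ℝ => f q.1 q.2) Dset := hf.mono Dset_subset_Icc_prod
  have hμ : ContinuousOn (fun p : ℝ × ℝ => lam0 - c1 p.1 + c1 p.2) Dset :=
    (continuousOn_const.sub (hc1.comp continuousOn_fst fun _ hp => (Dset_subset_Icc_prod hp).1))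
      |>.add (hc1.comp continuousOn_snd fun _ hp => (Dset_subset_Icc_prod hp).2)
  obtain ⟨Cμ, hCμ⟩ := isCompact_Dset.exists_bound_of_continuousOn hμ
  obtain ⟨Cf, hCf⟩ := isCompact_Dset.exists_bound_of_continuousOn hfD
  intro p hp
  exact sub_eq_zero.1 ((hK1.sub hK2 hfD).eq_zero hCμ hCf hp)

/-- Uniqueness of the `C²` solution to the kernel equation on `D`. -/
theorem kernel_equation_uniqueness (lam0 : ℝ) (hlam0 : 0 < lam0)
    (c1 : ℝ → ℝ) (hc1 : ContinuousOn c1 (Icc 0 1))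
    (f : ℝ → ℝ → ℝ)
    (hf : ContinuousOn (fun p : ℝ × ℝ => f p.1 p.2) (Icc 0 1 ×ˢ Icc 0 1))
    (K1 K2 : ℝ × ℝ → ℝ) (hK1 : IsKernelSol lam0 c1 f K1) (hK2 : IsKernelSol lam0 c1 f K2) :
    ∀ p ∈ Dset, K1 p = K2 p :=
  kernel_equation_uniqueness_general lam0 c1 hc1 f hf K1 K2 hK1 hK2
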